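/- arXiv:1909.08309 — 9 statements merged into one kernel-verified Lean document; each statement's English description precedes it below -/
import Mathlib

section
/- For any metric d on the double of X, the metric I defined by I(x,y') = d_X(x,y) + 1 satisfies I ∘ d quasi-isometric to d and d ∘ I quasi-isometric to d; in particular, [I] is a two-sided unit of the semigroup M(X). -/
open Metric

/-- A cross-metric between metric spaces `X` and `Y`: the cross-distance part
`k x y = d(x, y)` of a metric on `X ⊔ Y` extending the given metrics, with the
distance between the two pieces bounded below away from zero. -/
structure CrossMetric (X Y : Type*) [MetricSpace X] [MetricSpace Y] where
  k : X → Y → ℝ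
  sep : ∃ ε > 0, ∀ x y, ε ≤ k x y
  tri_left : ∀ x x' y, k x y ≤ dist x x' + k x' y
  tri_right : ∀ x y y', k x y ≤ k x y' + dist y' y
  cross_left : ∀ x x' y, dist x x' ≤ k x y + k x' y
  cross_right : ∀ x y y', dist y y' ≤ k x y + k x y'

/-- Composition of cross-metrics: `(ρ ∘ d)(x,z) = inf_y [d(x,y) + ρ(y,z)]`. -/
noncomputable def compFun {X Y Z : Type*} (ρ : Y → Z → ℝ) (d : X → Y → ℝ) : X → Z → ℝ :=
  fun x z => ⨅ y, (d x y + ρ y z)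

/-- The adjoint cross-metric: `d*(y,x) = d(x,y)`. -/
def adjFun {X Y : Type*} (d : X → Y → ℝ) : Y → X → ℝ := fun y x => d x y

/-- Quasi-isometry of two cross-distance functions. -/
def QI {X Y : Type*} (d1 d2 : X → Y → ℝ) : Prop :=
  ∃ α > 0, ∃ β ≥ (1:ℝ), ∀ x y,
    -α + (1/β) * d1 x y ≤ d2 x y ∧ d2 x y ≤ α + β * d1 x y

/-! By the triangle inequalities of `d`, the infimum defining `(I ∘ d)(x, z')` is attained at
`y = z`, and the one defining `(d ∘ I)(x, z')` at `y = x`; so both composites equal `d + 1`, and a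
cross-distance shifted by a constant is quasi-isometric to it. -/

theorem QI.of_eq_add_const {X Y : Type*} {d₁ d₂ : X → Y → ℝ} (c : ℝ)
    (h : ∀ x y, d₁ x y = d₂ x y + c) : QI d₁ d₂ := by
  refine ⟨|c| + 1, by positivity, 1, le_rfl, fun x y => ?_⟩
  rw [h]
  constructor <;> linarith [neg_abs_le c, le_abs_self c]

namespace CrossMetric

variable {X Y : Type*} [MetricSpace X] [MetricSpace Y] (d : CrossMetric X Y)

theorem compFun_dist_add_const_left (c : ℝ) (x : X) (z : Y) :
    compFun (fun y z => dist y z + c) d.k x z = d.k x z + c := by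
  have : Nonempty Y := ⟨z⟩
  refine IsGLB.ciInf_eq (IsLeast.isGLB ⟨⟨z, by simp⟩, ?_⟩)
  rintro _ ⟨y, rfl⟩
  linarith [d.tri_right x z y]

theorem compFun_dist_add_const_right (c : ℝ) (x : X) (z : Y) :
    compFun d.k (fun x y => dist x y + c) x z = d.k x z + c := by
  have : Nonempty X := ⟨x⟩
  refine IsGLB.ciInf_eq (IsLeast.isGLB ⟨⟨x, by simp [add_comm]⟩, ?_⟩)
  rintro _ ⟨y, rfl⟩
  linarith [d.tri_left x y z]

end CrossMetric

theorem statement3_general {X : Type*} [MetricSpace X] (d : CrossMetric X X) :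
    QI (compFun (fun x y => dist x y + 1) d.k) d.k ∧
    QI (compFun d.k (fun x y => dist x y + 1)) d.k :=
  ⟨QI.of_eq_add_const 1 (d.compFun_dist_add_const_left 1),
    QI.of_eq_add_const 1 (d.compFun_dist_add_const_right 1)⟩

/-- the metric `I(x,y') = d_X(x,y) + 1` is a two-sided unit up to
quasi-isometry: `I ∘ d ~ d` and `d ∘ I ~ d` for every metric `d` on the double of `X`. -/
theorem statement3 {X : Type*} [MetricSpace X] [Nonempty X] (d : CrossMetric X X) :
    QI (compFun (fun x y => dist x y + 1) d.k) d.k ∧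
    QI (compFun d.k (fun x y => dist x y + 1)) d.k :=
  statement3_general d
end

section
/- For any metric d on the double of X, d(x,y') ≤ (d ∘ d* ∘ d)(x,y') ≤ 3 d(x,y') for all x,y ∈ X; in particular d ∘ d* ∘ d is quasi-isometric to d. -/
open Metric

/-!
Both infima range over nonnegative reals, so they are genuine infima (not the junk value
of an unbounded `⨅`) and every choice of intermediate points bounds them from above.
For the upper bound, choose the intermediate points `x` and `y'`: this gives
`d(x,y') + d(x,y') + d(x,y')`. For the lower bound, `d* ∘ d` dominates the metric of `X`,
because `dist x z ≤ d(x,w') + d(z,w')`; so `(d ∘ d* ∘ d)(x,y') ≥ inf_z [dist x z + d(z,y')]`,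
which is at least `d(x,y')` by the triangle inequality.
-/

theorem compFun_nonneg {X Y Z : Type*} {ρ : Y → Z → ℝ} {d : X → Y → ℝ}
    (hd : ∀ x y, 0 ≤ d x y) (hρ : ∀ y z, 0 ≤ ρ y z) (x : X) (z : Z) :
    0 ≤ compFun ρ d x z :=
  Real.iInf_nonneg fun y => add_nonneg (hd x y) (hρ y z)

theorem compFun_le_add {X Y Z : Type*} {ρ : Y → Z → ℝ} {d : X → Y → ℝ}
    (hd : ∀ x y, 0 ≤ d x y) (hρ : ∀ y z, 0 ≤ ρ y z) (x : X) (y : Y) (z : Z) :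
    compFun ρ d x z ≤ d x y + ρ y z :=
  ciInf_le ⟨0, by rintro _ ⟨w, rfl⟩; exact add_nonneg (hd x w) (hρ w z)⟩ y

theorem QI.of_le_of_le_mul {X Y : Type*} {d₁ d₂ : X → Y → ℝ} {c : ℝ} (hc : 1 ≤ c)
    (h : ∀ x y, d₂ x y ≤ d₁ x y ∧ d₁ x y ≤ c * d₂ x y) : QI d₁ d₂ := by
  refine ⟨1, one_pos, c, hc, fun x y => ?_⟩
  obtain ⟨hle, hle_mul⟩ := h x y
  have hc_pos : 0 < c := by linarith
  constructor
  · have : 1 / c * d₁ x y ≤ d₂ x y := by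
      rw [one_div_mul_eq_div, div_le_iff₀ hc_pos, mul_comm]
      exact hle_mul
    linarith
  · nlinarith [mul_nonneg (sub_nonneg.2 hc) (sub_nonneg.2 hle)]

namespace CrossMetric

variable {X Y : Type*} [MetricSpace X] [MetricSpace Y] (d : CrossMetric X Y)

theorem k_nonneg (x : X) (y : Y) : 0 ≤ d.k x y := by
  obtain ⟨ε, hε, hsep⟩ := d.sep
  exact hε.le.trans (hsep x y)

theorem dist_le_compFun_adjFun [Nonempty Y] (x z : X) :
    dist x z ≤ compFun (adjFun d.k) d.k x z :=
  le_ciInf fun w => d.cross_left x z w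

theorem le_compFun_adjFun_comp (x : X) (y : Y) :
    d.k x y ≤ compFun d.k (compFun (adjFun d.k) d.k) x y := by
  have : Nonempty X := ⟨x⟩
  have : Nonempty Y := ⟨y⟩
  refine le_ciInf fun z => ?_
  calc d.k x y ≤ dist x z + d.k z y := d.tri_left x z y
    _ ≤ compFun (adjFun d.k) d.k x z + d.k z y := by
      gcongr
      exact d.dist_le_compFun_adjFun x z

theorem compFun_adjFun_comp_le (x : X) (y : Y) :
    compFun d.k (compFun (adjFun d.k) d.k) x y ≤ 3 * d.k x y := by
  have hinner_nonneg : ∀ x z : X, 0 ≤ compFun (adjFun d.k) d.k x z :=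
    compFun_nonneg d.k_nonneg fun w z => d.k_nonneg z w
  calc compFun d.k (compFun (adjFun d.k) d.k) x y
      ≤ compFun (adjFun d.k) d.k x x + d.k x y :=
        compFun_le_add hinner_nonneg d.k_nonneg x x y
    _ ≤ (d.k x y + d.k x y) + d.k x y := by
        gcongr
        exact compFun_le_add d.k_nonneg (fun w z => d.k_nonneg z w) x y x
    _ = 3 * d.k x y := by ring

end CrossMetric

theorem statement4_general {X : Type*} [MetricSpace X] (d : CrossMetric X X) :
    (∀ x y, d.k x y ≤ compFun d.k (compFun (adjFun d.k) d.k) x y ∧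
      compFun d.k (compFun (adjFun d.k) d.k) x y ≤ 3 * d.k x y) ∧
    QI (compFun d.k (compFun (adjFun d.k) d.k)) d.k := by
  have bounds : ∀ x y, d.k x y ≤ compFun d.k (compFun (adjFun d.k) d.k) x y ∧
      compFun d.k (compFun (adjFun d.k) d.k) x y ≤ 3 * d.k x y :=
    fun x y => ⟨d.le_compFun_adjFun_comp x y, d.compFun_adjFun_comp_le x y⟩
  exact ⟨bounds, QI.of_le_of_le_mul (by norm_num) bounds⟩

/-- for any metric `d` on the double of `X`,
`d ≤ d ∘ d* ∘ d ≤ 3 d` pointwise on cross pairs; in particular `d ∘ d* ∘ d ~ d`. -/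
theorem statement4 {X : Type*} [MetricSpace X] [Nonempty X] (d : CrossMetric X X) :
    (∀ x y, d.k x y ≤ compFun d.k (compFun (adjFun d.k) d.k) x y ∧
      compFun d.k (compFun (adjFun d.k) d.k) x y ≤ 3 * d.k x y) ∧
    QI (compFun d.k (compFun (adjFun d.k) d.k)) d.k :=
  statement4_general d
end

section
/- If d and ρ are selfadjoint idempotent metrics on the double of X, then d ∘ ρ is quasi-isometric to ρ ∘ d; that is, selfadjoint idempotents in M(X) commute. -/
/-!
For a selfadjoint cross-metric `d`, the triangle inequality through the mirrored point gives
`d(x, y') = d(y, x') ≤ d(y, z') + |x - z|`, so `ρ ∘ d` and `d ∘ ρ` differ by at most `2 |x - z|`.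
Idempotence makes the diagonal `d(y, y')` linearly bounded by `d(x, y')`, hence
`|x - y| ≤ d(x, y') + d(y, y')` is linearly bounded by `d(x, y')`; thus `|x - z|` is linearly
bounded by `(d ∘ ρ)(x, z)`, and `ρ ∘ d` is linearly bounded by `d ∘ ρ`. Exchanging the roles
of `d` and `ρ` gives the quasi-isometry.
-/

open Metric

lemma le_add_mul_ciInf {ι : Type*} [Nonempty ι] {f : ι → ℝ} {c A B : ℝ} (hB : 0 < B)
    (h : ∀ i, c ≤ A + B * f i) : c ≤ A + B * ⨅ i, f i := by
  have : (c - A) / B ≤ ⨅ i, f i :=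
    le_ciInf fun i => by rw [div_le_iff₀ hB]; linarith [h i]
  rw [div_le_iff₀ hB] at this
  linarith

lemma QI.of_le_add_mul {X Y : Type*} {d₁ d₂ : X → Y → ℝ}
    (h₁ : ∀ x y, 0 ≤ d₁ x y) (h₂ : ∀ x y, 0 ≤ d₂ x y)
    (h₁₂ : ∃ A, ∃ B > 0, ∀ x y, d₂ x y ≤ A + B * d₁ x y)
    (h₂₁ : ∃ A, ∃ B > 0, ∀ x y, d₁ x y ≤ A + B * d₂ x y) : QI d₁ d₂ := by
  obtain ⟨A, B, hB, hA⟩ := h₁₂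
  obtain ⟨A', B', hB', hA'⟩ := h₂₁
  set α := |A| + |A'| + 1
  set β := B + B' + 1
  have hα : 1 ≤ α := by linarith [abs_nonneg A, abs_nonneg A']
  have hβ : 1 ≤ β := by linarith
  refine ⟨α, by linarith, β, hβ, fun x y => ⟨?_, ?_⟩⟩
  · have hd₁ : d₁ x y ≤ β * (α + d₂ x y) := calc
      d₁ x y ≤ A' + B' * d₂ x y := hA' x y
      _ ≤ α * β + β * d₂ x y := by
        gcongr
        · nlinarith [le_abs_self A', abs_nonneg A]
        · exact h₂ x y
        · linarith
      _ = β * (α + d₂ x y) := by ring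
    have : d₁ x y / β ≤ α + d₂ x y := by rwa [div_le_iff₀' (by linarith)]
    linarith [one_div_mul_eq_div β (d₁ x y)]
  · calc d₂ x y ≤ A + B * d₁ x y := hA x y
      _ ≤ α + β * d₁ x y := by
        gcongr
        · linarith [le_abs_self A, abs_nonneg A']
        · exact h₁ x y
        · linarith

namespace CrossMetric

variable {X Y Z : Type*} [MetricSpace X] [MetricSpace Y] [MetricSpace Z]

lemma nonneg (d : CrossMetric X Y) (x : X) (y : Y) : 0 ≤ d.k x y := by
  obtain ⟨ε, hε, h⟩ := d.sep
  exact hε.le.trans (h x y)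

lemma compFun_le (d : CrossMetric X Y) (ρ : CrossMetric Y Z) (x : X) (y : Y) (z : Z) :
    compFun ρ.k d.k x z ≤ d.k x y + ρ.k y z :=
  ciInf_le ⟨0, by rintro _ ⟨u, rfl⟩; exact add_nonneg (d.nonneg x u) (ρ.nonneg u z)⟩ y

lemma compFun_nonneg [Nonempty Y] (d : CrossMetric X Y) (ρ : CrossMetric Y Z) (x : X) (z : Z) :
    0 ≤ compFun ρ.k d.k x z :=
  le_ciInf fun y => add_nonneg (d.nonneg x y) (ρ.nonneg y z)

lemma dist_le_of_idempotent (d : CrossMetric X X) (hd : ∀ x y, d.k x y = d.k y x)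
    (hd2 : QI (compFun d.k d.k) d.k) : ∃ A, ∃ B > 0, ∀ x y, dist x y ≤ A + B * d.k x y := by
  obtain ⟨α, -, β, hβ, H⟩ := hd2
  refine ⟨α, 1 + 2 * β, by linarith, fun x y => ?_⟩
  have hdiag : d.k y y ≤ α + 2 * β * d.k x y := calc
    d.k y y ≤ α + β * compFun d.k d.k y y := (H y y).2
    _ ≤ α + β * (d.k y x + d.k x y) := by gcongr; exact d.compFun_le d y x y
    _ = α + 2 * β * d.k x y := by rw [hd y x]; ring
  linarith [d.cross_left x y y]

lemma dist_le_compFun [Nonempty X] {d ρ : CrossMetric X X}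
    (hd : ∃ A, ∃ B > 0, ∀ x y, dist x y ≤ A + B * d.k x y)
    (hρ : ∃ A, ∃ B > 0, ∀ x y, dist x y ≤ A + B * ρ.k x y) :
    ∃ A, ∃ B > 0, ∀ x z, dist x z ≤ A + B * compFun d.k ρ.k x z := by
  obtain ⟨A, B, hB, hA⟩ := hd
  obtain ⟨A', B', hB', hA'⟩ := hρ
  refine ⟨A + A', B + B', by linarith, fun x z => le_add_mul_ciInf (by linarith) fun y => ?_⟩
  nlinarith [dist_triangle x y z, hA' x y, hA y z, ρ.nonneg x y, d.nonneg y z]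

lemma compFun_le_compFun_add_dist [Nonempty X] {d ρ : CrossMetric X X}
    (hd : ∀ x y, d.k x y = d.k y x) (hρ : ∀ x y, ρ.k x y = ρ.k y x) (x z : X) :
    compFun ρ.k d.k x z ≤ compFun d.k ρ.k x z + 2 * dist x z := by
  suffices compFun ρ.k d.k x z - 2 * dist x z ≤ compFun d.k ρ.k x z by linarith
  refine le_ciInf fun y => ?_
  have hdxy : d.k x y ≤ d.k y z + dist z x := hd x y ▸ d.tri_right y x z
  have hρyz : ρ.k y z ≤ dist z x + ρ.k x y := hρ z y ▸ ρ.tri_left z x y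
  linarith [d.compFun_le ρ x y z, dist_comm z x]

lemma compFun_le_add_mul_compFun [Nonempty X] {d ρ : CrossMetric X X}
    (hd : ∀ x y, d.k x y = d.k y x) (hρ : ∀ x y, ρ.k x y = ρ.k y x)
    (hd2 : QI (compFun d.k d.k) d.k) (hρ2 : QI (compFun ρ.k ρ.k) ρ.k) :
    ∃ A, ∃ B > 0, ∀ x z, compFun ρ.k d.k x z ≤ A + B * compFun d.k ρ.k x z := by
  obtain ⟨A, B, hB, hA⟩ :=
    dist_le_compFun (d.dist_le_of_idempotent hd hd2) (ρ.dist_le_of_idempotent hρ hρ2)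
  refine ⟨2 * A, 1 + 2 * B, by linarith, fun x z => ?_⟩
  linarith [compFun_le_compFun_add_dist hd hρ x z, hA x z]

end CrossMetric

/-- selfadjoint idempotent metrics on the double of `X` commute up to
quasi-isometry: `d ∘ ρ ~ ρ ∘ d`. -/
theorem statement7 {X : Type*} [MetricSpace X] [Nonempty X] (d ρ : CrossMetric X X)
    (hd : ∀ x y, d.k x y = d.k y x) (hρ : ∀ x y, ρ.k x y = ρ.k y x)
    (hd2 : QI (compFun d.k d.k) d.k) (hρ2 : QI (compFun ρ.k ρ.k) ρ.k) :
    QI (compFun d.k ρ.k) (compFun ρ.k d.k) :=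
  QI.of_le_add_mul (ρ.compFun_nonneg d) (d.compFun_nonneg ρ)
    (CrossMetric.compFun_le_add_mul_compFun hd hρ hd2 hρ2)
    (CrossMetric.compFun_le_add_mul_compFun hρ hd hρ2 hd2)
end

section
/- For a subset A ⊆ X, the metric d_A on the double of X defined by d_A(x,y') = inf_{z∈A}[d_X(x,z) + 1 + d_X(z,y)] is selfadjoint and idempotent: d_A* = d_A, d_A(x,x') = 2 d_X(x,A) + 1, d_A(x,X') = d_X(x,A) + 1, and d_A ∘ d_A is quasi-isometric to d_A. -/
open Metric

/-!
Every term of `d_A(x,y') = inf_{z∈A} [d(x,z) + 1 + d(z,y)]` is at least `d(x,A) + 1 + d(y,A)`,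
and taking `z ∈ A` nearly closest to `x` shows this bound is sharp for `y = x` and for `y = z`;
this gives the formulas for `d_A(x,x')` and `d_A(x,X')`. For idempotency, a composite path `x → y' → z` crosses `A` twice, so the
triangle inequality gives `d_A(x,z') + 1 ≤ (d_A ∘ d_A)(x,z')`, while routing through `y = x`
gives `(d_A ∘ d_A)(x,z') ≤ d_A(x,x') + d_A(x,z') ≤ 3 d_A(x,z') - 1`.
-/

section DistVia

variable {X : Type*} [MetricSpace X] (A : Set X)

noncomputable def distVia (x y : X) : ℝ := ⨅ z : A, (dist x (z : X) + 1 + dist (z : X) y)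

variable {A}

lemma distVia_le_of_mem {z : X} (hz : z ∈ A) (x y : X) :
    distVia A x y ≤ dist x z + 1 + dist z y :=
  ciInf_le ⟨0, by rintro _ ⟨w, rfl⟩; positivity⟩ (⟨z, hz⟩ : A)

lemma distVia_nonneg (x y : X) : 0 ≤ distVia A x y :=
  Real.iInf_nonneg fun _ => by positivity

lemma distVia_comm (x y : X) : distVia A x y = distVia A y x :=
  iInf_congr fun z => by rw [dist_comm x, dist_comm _ y]; ring

lemma infDist_add_one_add_infDist_le_distVia (hA : A.Nonempty) (x y : X) :
    infDist x A + 1 + infDist y A ≤ distVia A x y := by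
  have : Nonempty A := hA.to_subtype
  refine le_ciInf fun z => ?_
  have hx := infDist_le_dist_of_mem (x := x) z.2
  have hy := infDist_le_dist_of_mem (x := y) z.2
  rw [dist_comm y] at hy
  linarith

lemma infDist_add_one_le_distVia (hA : A.Nonempty) (x y : X) :
    infDist x A + 1 ≤ distVia A x y := by
  linarith [infDist_add_one_add_infDist_le_distVia hA x y, infDist_nonneg (x := y) (s := A)]

lemma distVia_self (hA : A.Nonempty) (x : X) : distVia A x x = 2 * infDist x A + 1 := by
  refine le_antisymm ?_ (by linarith [infDist_add_one_add_infDist_le_distVia hA x x])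
  have : (distVia A x x - 1) / 2 ≤ infDist x A := (le_infDist hA).2 fun z hz => by
    have := distVia_le_of_mem hz x x
    rw [dist_comm z] at this
    linarith
  linarith

lemma iInf_distVia (hA : A.Nonempty) (x : X) : ⨅ y, distVia A x y = infDist x A + 1 := by
  have : Nonempty X := ⟨hA.some⟩
  have hbdd : BddBelow (Set.range (distVia A x)) :=
    ⟨0, by rintro _ ⟨y, rfl⟩; exact distVia_nonneg x y⟩
  refine le_antisymm ?_ (le_ciInf (infDist_add_one_le_distVia hA x))
  have : (⨅ y, distVia A x y) - 1 ≤ infDist x A := (le_infDist hA).2 fun z hz => by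
    have := (ciInf_le hbdd z).trans (distVia_le_of_mem hz x z)
    rw [dist_self] at this
    linarith
  linarith

lemma distVia_add_one_le_distVia_add_distVia (hA : A.Nonempty) (x y z : X) :
    distVia A x z + 1 ≤ distVia A x y + distVia A y z := by
  have : Nonempty A := hA.to_subtype
  refine le_ciInf_add_ciInf fun a b => ?_
  have hxz := distVia_le_of_mem a.2 x z
  have haz : dist (a : X) z ≤ dist (a : X) y + dist y b + dist (b : X) z :=
    dist_triangle4 _ _ _ _
  linarith

lemma distVia_add_one_le_compFun (hA : A.Nonempty) (x z : X) :
    distVia A x z + 1 ≤ compFun (distVia A) (distVia A) x z :=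
  have : Nonempty X := ⟨hA.some⟩
  le_ciInf fun y => distVia_add_one_le_distVia_add_distVia hA x y z

lemma compFun_distVia_le (hA : A.Nonempty) (x z : X) :
    compFun (distVia A) (distVia A) x z ≤ 3 * distVia A x z - 1 := by
  have hbdd : BddBelow (Set.range fun y => distVia A x y + distVia A y z) :=
    ⟨0, by rintro _ ⟨y, rfl⟩; exact add_nonneg (distVia_nonneg x y) (distVia_nonneg y z)⟩
  have hvia_x : compFun (distVia A) (distVia A) x z ≤ distVia A x x + distVia A x z :=
    ciInf_le hbdd x
  linarith [distVia_self hA x, infDist_add_one_le_distVia hA x z]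

lemma qi_compFun_distVia (hA : A.Nonempty) : QI (compFun (distVia A) (distVia A)) (distVia A) := by
  refine ⟨1, one_pos, 3, by norm_num, fun x z => ⟨?_, ?_⟩⟩
  · linarith [compFun_distVia_le hA x z]
  · linarith [distVia_add_one_le_compFun hA x z, distVia_nonneg (A := A) x z]

end DistVia

theorem statement9_general {X : Type*} [MetricSpace X] (A : Set X)
    (hA : A.Nonempty) :
    let dA : X → X → ℝ := fun x y => ⨅ z : A, (dist x (z : X) + 1 + dist (z : X) y)
    (∀ x y, dA x y = dA y x) ∧
    (∀ x, dA x x = 2 * infDist x A + 1) ∧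
    (∀ x, (⨅ y, dA x y) = infDist x A + 1) ∧
    QI (compFun dA dA) dA :=
  ⟨distVia_comm, distVia_self hA, iInf_distVia hA, qi_compFun_distVia hA⟩

/-- for a nonempty `A ⊆ X`, the metric
`d_A(x,y') = inf_{z∈A}[d(x,z) + 1 + d(z,y)]` on the double of `X` is selfadjoint,
satisfies `d_A(x,x') = 2 d(x,A) + 1` and `d_A(x,X') = d(x,A) + 1`, and is idempotent. -/
theorem statement9 {X : Type*} [MetricSpace X] [Nonempty X] (A : Set X)
    (hA : A.Nonempty) :
    let dA : X → X → ℝ := fun x y => ⨅ z : A, (dist x (z : X) + 1 + dist (z : X) y)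
    (∀ x y, dA x y = dA y x) ∧
    (∀ x, dA x x = 2 * infDist x A + 1) ∧
    (∀ x, (⨅ y, dA x y) = infDist x A + 1) ∧
    QI (compFun dA dA) dA :=
  statement9_general A hA
end

section
/- For nonempty closed subsets A, B of a metric space X, the metrics d_A and d_B on the double of X are quasi-isometric if and only if there exists C > 0 such that A lies in the C-neighborhood of B and B lies in the C-neighborhood of A. -/
open Metric

/-!
The two doubled metrics differ only in the set of "bridges" `z` through which a path from `x`
to `y'` may pass. If every point of `A` is `C`-close to `B`, rerouting a path through a nearby
point of `B` costs at most `2C`, so `d_B ≤ d_A + 2C`; symmetrically `d_A ≤ d_B + 2C`. Conversely,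
`d_A(a, a') ≤ 1` for `a ∈ A` while `d_B(a, a') ≥ 2 dist(a, B) + 1`, so a quasi-isometry bounds
`dist(a, B)` uniformly on `A`, and likewise `dist(b, A)` on `B`.
-/

noncomputable def doubleDist {X : Type*} [MetricSpace X] (A : Set X) (x y : X) : ℝ :=
  ⨅ z : A, (dist x (z : X) + 1 + dist (z : X) y)

theorem QI.symm {X Y : Type*} {d₁ d₂ : X → Y → ℝ} (h : QI d₁ d₂) : QI d₂ d₁ := by
  obtain ⟨α, hα, β, hβ, h⟩ := h
  have hβ₀ : 0 < β := by linarith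
  refine ⟨β * α, by positivity, β, hβ, fun x y => ⟨?_, ?_⟩⟩
  · have hle := mul_le_mul_of_nonneg_left (h x y).2 (one_div_pos.mpr hβ₀).le
    have hα_le : 1 / β * α ≤ β * α := by
      gcongr
      exact (div_le_one_of_le₀ hβ hβ₀.le).trans hβ
    have : 1 / β * (α + β * d₁ x y) = 1 / β * α + d₁ x y := by
      rw [mul_add, ← mul_assoc, one_div_mul_cancel hβ₀.ne', one_mul]
    linarith
  · have hle := mul_le_mul_of_nonneg_left (h x y).1 hβ₀.le
    have : β * (-α + 1 / β * d₁ x y) = -(β * α) + d₁ x y := by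
      rw [mul_add, ← mul_assoc, mul_one_div_cancel hβ₀.ne', one_mul, mul_neg]
    linarith

section DoubleDist

variable {X : Type*} [MetricSpace X] {A B : Set X}

theorem doubleDist_bddBelow (A : Set X) (x y : X) :
    BddBelow (Set.range fun z : A => dist x (z : X) + 1 + dist (z : X) y) :=
  ⟨0, by rintro _ ⟨z, rfl⟩; positivity⟩

theorem doubleDist_le_of_mem {z : X} (hz : z ∈ A) (x y : X) :
    doubleDist A x y ≤ dist x z + 1 + dist z y :=
  ciInf_le (doubleDist_bddBelow A x y) ⟨z, hz⟩

theorem doubleDist_self_le_one {a : X} (ha : a ∈ A) : doubleDist A a a ≤ 1 := by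
  simpa using doubleDist_le_of_mem ha a a

theorem infDist_add_one_add_infDist_le_doubleDist (hA : A.Nonempty) (x y : X) :
    infDist x A + 1 + infDist y A ≤ doubleDist A x y := by
  have : Nonempty A := hA.to_subtype
  refine le_ciInf fun z => ?_
  have hx := infDist_le_dist_of_mem (x := x) z.2
  have hy := infDist_le_dist_of_mem (x := y) z.2
  rw [dist_comm] at hy
  linarith

theorem doubleDist_le_doubleDist_add (hA : A.Nonempty) (hB : B.Nonempty) {C : ℝ}
    (hAB : ∀ a ∈ A, infDist a B ≤ C) (x y : X) :
    doubleDist B x y ≤ doubleDist A x y + 2 * C := by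
  have : Nonempty A := hA.to_subtype
  refine le_of_forall_pos_le_add fun ε hε => ?_
  have key : doubleDist B x y - 2 * C - ε ≤ doubleDist A x y := le_ciInf fun z => by
    obtain ⟨w, hw, hzw⟩ :=
      (infDist_lt_iff hB).mp ((hAB z z.2).trans_lt (lt_add_of_pos_right C (half_pos hε)))
    have hxw := dist_triangle x z w
    have hwy := dist_triangle_left w y z
    linarith [doubleDist_le_of_mem hw x y]
  linarith

theorem exists_infDist_le_of_qi_doubleDist (hB : B.Nonempty)
    (h : QI (doubleDist A) (doubleDist B)) : ∃ C > 0, ∀ a ∈ A, infDist a B ≤ C := by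
  obtain ⟨α, hα, β, hβ, h⟩ := h
  refine ⟨α + β, by linarith, fun a ha => ?_⟩
  have hBa := infDist_add_one_add_infDist_le_doubleDist hB a a
  have hAa := doubleDist_self_le_one ha
  have := (h a a).2
  nlinarith [infDist_nonneg (x := a) (s := B)]

theorem qi_doubleDist_of_infDist_le (hA : A.Nonempty) (hB : B.Nonempty) {C : ℝ} (hC : 0 < C)
    (hAB : ∀ a ∈ A, infDist a B ≤ C) (hBA : ∀ b ∈ B, infDist b A ≤ C) :
    QI (doubleDist A) (doubleDist B) := by
  refine ⟨2 * C, by positivity, 1, le_rfl, fun x y => ⟨?_, ?_⟩⟩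
  · linarith [doubleDist_le_doubleDist_add hB hA hBA x y]
  · linarith [doubleDist_le_doubleDist_add hA hB hAB x y]

end DoubleDist

theorem statement10_general {X : Type*} [MetricSpace X] (A B : Set X)
    (hA : A.Nonempty) (hB : B.Nonempty) :
    QI (fun x y => ⨅ z : A, (dist x (z : X) + 1 + dist (z : X) y))
       (fun x y => ⨅ z : B, (dist x (z : X) + 1 + dist (z : X) y)) ↔
      ∃ C > (0:ℝ), (∀ a ∈ A, infDist a B ≤ C) ∧ (∀ b ∈ B, infDist b A ≤ C) := by
  change QI (doubleDist A) (doubleDist B) ↔ _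
  constructor
  · intro h
    obtain ⟨C₁, hC₁, hAB⟩ := exists_infDist_le_of_qi_doubleDist hB h
    obtain ⟨C₂, hC₂, hBA⟩ := exists_infDist_le_of_qi_doubleDist hA h.symm
    exact ⟨max C₁ C₂, lt_max_of_lt_left hC₁, fun a ha => (hAB a ha).trans (le_max_left _ _),
      fun b hb => (hBA b hb).trans (le_max_right _ _)⟩
  · rintro ⟨C, hC, hAB, hBA⟩
    exact qi_doubleDist_of_infDist_le hA hB hC hAB hBA

/-- for nonempty closed `A, B ⊆ X`, `d_A` and `d_B` are quasi-isometric
iff for some `C > 0` each of `A`, `B` lies in the `C`-neighborhood of the other. -/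
theorem statement10 {X : Type*} [MetricSpace X] [Nonempty X] (A B : Set X)
    (hA : A.Nonempty) (hB : B.Nonempty) (hAc : IsClosed A) (hBc : IsClosed B) :
    QI (fun x y => ⨅ z : A, (dist x (z : X) + 1 + dist (z : X) y))
       (fun x y => ⨅ z : B, (dist x (z : X) + 1 + dist (z : X) y)) ↔
      ∃ C > (0:ℝ), (∀ a ∈ A, infDist a B ≤ C) ∧ (∀ b ∈ B, infDist b A ≤ C) :=
  statement10_general A B hA hB
end

section
/- In M(X), every idempotent is selfadjoint: if a ∈ M(X) satisfies a² = a, then a* = a. -/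
open Metric

/-!
A cross-metric always controls the metric of `X` through its composition square: for any
intermediate point `u` the cross-triangle inequalities give
`dist x y ≤ d(x,u') + d(u,y') + 2 d(x,y')`, hence `dist x y ≤ (d ∘ d)(x,y') + 2 d(x,y')`.
Going through `d(x,x')` also gives `d(y,x') ≤ 2 dist x y + d(x,y')`. So `d*` is bounded by
`2 (d ∘ d) + 5 d`, which is affine in `d` once `d ∘ d ~ d`; swapping the variables gives the
reverse bound.
-/

namespace CrossMetric

variable {X : Type*} [MetricSpace X] (d : CrossMetric X X)

theorem k_swap_le (x y : X) : d.k y x ≤ 2 * dist x y + d.k x y := by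
  linarith [d.tri_left y x x, d.tri_right x x y, dist_comm x y]

theorem dist_le_compFun_s12 (x y : X) : dist x y ≤ compFun d.k d.k x y + 2 * d.k x y := by
  have : Nonempty X := ⟨x⟩
  have hmid : ∀ u, dist x y - 2 * d.k x y ≤ d.k x u + d.k u y := fun u => by
    linarith [dist_triangle x u y, d.cross_left x u y, d.cross_right x u y]
  have hinf : dist x y - 2 * d.k x y ≤ compFun d.k d.k x y := le_ciInf hmid
  linarith

theorem k_swap_le_compFun (x y : X) :
    d.k y x ≤ 2 * compFun d.k d.k x y + 5 * d.k x y := by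
  linarith [d.k_swap_le x y, d.dist_le_compFun_s12 x y]

end CrossMetric

section QI

variable {X Y : Type*} {d₁ d₂ : X → Y → ℝ}

theorem QI.exists_le_affine (h : QI d₁ d₂) :
    ∃ A > 0, ∃ B ≥ (1 : ℝ), ∀ x y, d₁ x y ≤ A + B * d₂ x y := by
  obtain ⟨α, hα, β, hβ, hqi⟩ := h
  have hβ0 : 0 < β := by linarith
  refine ⟨α * β, mul_pos hα hβ0, β, hβ, fun x y => ?_⟩
  have h1 := mul_le_mul_of_nonneg_left (hqi x y).1 hβ0.le
  rw [mul_add, ← mul_assoc, mul_one_div_cancel hβ0.ne', one_mul] at h1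
  linarith

theorem QI.of_le_affine {A B : ℝ} (hA : 0 < A) (hB : 1 ≤ B)
    (h₁₂ : ∀ x y, d₁ x y ≤ A + B * d₂ x y) (h₂₁ : ∀ x y, d₂ x y ≤ A + B * d₁ x y) :
    QI d₁ d₂ := by
  refine ⟨A, hA, B, hB, fun x y => ⟨?_, h₂₁ x y⟩⟩
  have hB0 : 0 < B := by linarith
  have h := mul_le_mul_of_nonneg_left (h₁₂ x y) (one_div_pos.mpr hB0).le
  rw [mul_add, ← mul_assoc, one_div_mul_cancel hB0.ne', one_mul] at h
  have : 1 / B * A ≤ A := by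
    rw [one_div_mul_eq_div]; exact div_le_self hA.le hB
  linarith

end QI

theorem statement12_general {X : Type*} [MetricSpace X] (d : CrossMetric X X)
    (h : QI (compFun d.k d.k) d.k) : QI (adjFun d.k) d.k := by
  obtain ⟨A, hA, B, hB, hcomp⟩ := h.exists_le_affine
  have hswap : ∀ x y, d.k y x ≤ 2 * A + (2 * B + 5) * d.k x y := fun x y => by
    linarith [d.k_swap_le_compFun x y, hcomp x y]
  exact QI.of_le_affine (A := 2 * A) (B := 2 * B + 5) (by linarith) (by linarith)
    hswap (fun x y => hswap y x)

/-- every idempotent in `M(X)` is selfadjoint: if `d ∘ d ~ d`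
then `d* ~ d`. -/
theorem statement12 {X : Type*} [MetricSpace X] [Nonempty X] (d : CrossMetric X X)
    (h : QI (compFun d.k d.k) d.k) : QI (adjFun d.k) d.k :=
  statement12_general d h
end

section
/- Fix x_0 ∈ X and let e_0 be the metric on the double of X given by e_0(x,y') = d_X(x,x_0) + 1 + d_X(x_0,y). Then for any metric d on the double of X, both d ∘ e_0 and e_0 ∘ d are quasi-isometric to e_0; in fact e_0(x,z') - d(x_0,x_0') ≤ (e_0 ∘ d)(x,z') ≤ e_0(x,z') + d(x_0,x_0') for all x,z ∈ X. Hence [e_0] is a two-sided zero element of M(X). -/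
/-!
Each composite is an infimum over `y` of a cross-distance through `y`. The triangle inequalities
of the cross-metric `d` bound every term from below by `e₀(x, z) - d(x₀, x₀')`, and the term at
`y = x₀` is at most `e₀(x, z) + d(x₀, x₀')`. A bounded difference is a quasi-isometry with `β = 1`.
-/

open Metric

/-- For `p = q = x₀` on the double of `X` this is the paper's `e₀`. -/
def baseCross {X Y : Type*} [MetricSpace X] [MetricSpace Y] (p : X) (q : Y) : X → Y → ℝ :=
  fun x y => dist x p + 1 + dist q y

lemma bounds_ciInf_of_le_of_le {ι : Type*} {f : ι → ℝ} {a b : ℝ} (hlow : ∀ i, a ≤ f i)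
    (i₀ : ι) (hi₀ : f i₀ ≤ b) : a ≤ ⨅ i, f i ∧ ⨅ i, f i ≤ b :=
  haveI : Nonempty ι := ⟨i₀⟩
  ⟨le_ciInf hlow, (ciInf_le ⟨a, Set.forall_mem_range.2 hlow⟩ i₀).trans hi₀⟩

lemma QI.of_bounded_sub {X Y : Type*} {d₁ d₂ : X → Y → ℝ} (C : ℝ)
    (h : ∀ x y, d₂ x y - C ≤ d₁ x y ∧ d₁ x y ≤ d₂ x y + C) : QI d₁ d₂ := by
  refine ⟨|C| + 1, by positivity, 1, le_rfl, fun x y => ?_⟩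
  have := le_abs_self C
  have := h x y
  constructor <;> linarith

section

variable {X Y Z : Type*} [MetricSpace X] [MetricSpace Y] [MetricSpace Z]

lemma compFun_baseCross_crossMetric_bounds (d : CrossMetric X Y) (p : X) (q : Y) (r : Z)
    (x : X) (z : Z) :
    baseCross p r x z - d.k p q ≤ compFun (baseCross q r) d.k x z ∧
      compFun (baseCross q r) d.k x z ≤ baseCross p r x z + d.k p q := by
  refine bounds_ciInf_of_le_of_le (fun y => ?_) q ?_
  · have hxp := d.cross_left x p y
    have hpy := d.tri_right p y q
    simp only [baseCross, dist_comm y q]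
    linarith
  · have hxq := d.tri_left x p q
    simp only [baseCross, dist_self]
    linarith

lemma compFun_crossMetric_baseCross_bounds (d : CrossMetric Y Z) (p : X) (q : Y) (r : Z)
    (x : X) (z : Z) :
    baseCross p r x z - d.k q r ≤ compFun d.k (baseCross p q) x z ∧
      compFun d.k (baseCross p q) x z ≤ baseCross p r x z + d.k q r := by
  refine bounds_ciInf_of_le_of_le (fun y => ?_) q ?_
  · have hrz := d.cross_right q r z
    have hqz := d.tri_left q y z
    simp only [baseCross]
    linarith
  · have hqz := d.tri_right q z r
    simp only [baseCross, dist_self]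
    linarith

end

theorem statement14_general {X : Type*} [MetricSpace X] (x0 : X)
    (d : CrossMetric X X) :
    let e0 : X → X → ℝ := fun x y => dist x x0 + 1 + dist x0 y
    QI (compFun d.k e0) e0 ∧ QI (compFun e0 d.k) e0 ∧
    (∀ x z, e0 x z - d.k x0 x0 ≤ compFun e0 d.k x z ∧
      compFun e0 d.k x z ≤ e0 x z + d.k x0 x0) :=
  ⟨QI.of_bounded_sub _ (compFun_crossMetric_baseCross_bounds d x0 x0 x0),
    QI.of_bounded_sub _ (compFun_baseCross_crossMetric_bounds d x0 x0 x0),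
    compFun_baseCross_crossMetric_bounds d x0 x0 x0⟩

/-- with `e_0(x,y') = d(x,x_0) + 1 + d(x_0,y)`, for every metric `d` on
the double of `X` both `d ∘ e_0` and `e_0 ∘ d` are quasi-isometric to `e_0`, and in fact
`e_0(x,z') - d(x_0,x_0') ≤ (e_0 ∘ d)(x,z') ≤ e_0(x,z') + d(x_0,x_0')`.
Hence `[e_0]` is a two-sided zero of `M(X)`. -/
theorem statement14 {X : Type*} [MetricSpace X] [Nonempty X] (x0 : X)
    (d : CrossMetric X X) :
    let e0 : X → X → ℝ := fun x y => dist x x0 + 1 + dist x0 y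
    QI (compFun d.k e0) e0 ∧ QI (compFun e0 d.k) e0 ∧
    (∀ x z, e0 x z - d.k x0 x0 ≤ compFun e0 d.k x z ∧
      compFun e0 d.k x z ≤ e0 x z + d.k x0 x0) :=
  statement14_general x0 d
end

section
/- Let A, B ⊆ X and x_0 ∈ X. Suppose there exists β ≥ 1 such that for all R > 0, d_X(A \ B_R(x_0), B \ B_R(x_0)) > R/β, where B_R(x_0) is the ball of radius R around x_0. Then d_A ∘ d_B is quasi-isometric to e_0, i.e., [d_A][d_B] = [e_0] in M(X). -/
open Metric

/-!
Writing `D` for `d_A ∘ d_B`, one has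
`D(x, z) = 2 + inf_{a ∈ A, b ∈ B} (d(x, b) + d(b, a) + d(a, z))`.
Fixing `a₀ ∈ A`, `b₀ ∈ B` bounds `D` above by `e₀` plus a constant. Conversely, the separation
hypothesis applied at radius `R = min (d(a, x₀), d(b, x₀))` gives
`d(a, x₀) + d(b, x₀) ≤ (2β + 1) d(a, b)`, so a path `x → b → a → z` is at most `2β + 1` times
shorter than the path `x → x₀ → z`, whence `e₀ ≤ (2β + 1) D`.
-/

theorem QI.of_le_add_of_le_mul {X Y : Type*} {d₁ d₂ : X → Y → ℝ} {α β : ℝ} (hα : 0 < α)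
    (hβ : 1 ≤ β) (h₀ : ∀ x y, 0 ≤ d₁ x y) (hle_add : ∀ x y, d₁ x y ≤ d₂ x y + α)
    (hle_mul : ∀ x y, d₂ x y ≤ β * d₁ x y) : QI d₁ d₂ := by
  refine ⟨α, hα, β, hβ, fun x y => ⟨?_, ?_⟩⟩
  · have : 1 / β * d₁ x y ≤ d₁ x y :=
      mul_le_of_le_one_left (h₀ x y) (div_le_one_of_le₀ hβ (by linarith))
    linarith [hle_add x y]
  · linarith [hle_mul x y]

theorem dist_add_dist_le_of_forall_lt_dist_diff_ball {X : Type*} [PseudoMetricSpace X]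
    {x₀ : X} {A B : Set X} {β : ℝ} (hβ : 0 < β)
    (hsep : ∀ R > (0 : ℝ), ∀ a ∈ A \ ball x₀ R, ∀ b ∈ B \ ball x₀ R, R / β < dist a b)
    {a b : X} (ha : a ∈ A) (hb : b ∈ B) :
    dist a x₀ + dist b x₀ ≤ (2 * β + 1) * dist a b := by
  set R := min (dist a x₀) (dist b x₀)
  have hsum : dist a x₀ + dist b x₀ ≤ 2 * R + dist a b := by
    rcases min_choice (dist a x₀) (dist b x₀) with hR | hR <;>
      linarith [dist_triangle b a x₀, dist_triangle a b x₀, dist_comm a b]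
  have hR : R ≤ β * dist a b := by
    rcases (le_min dist_nonneg dist_nonneg : 0 ≤ R).eq_or_lt with hR0 | hR0
    · exact hR0.symm.trans_le (by positivity)
    · have hab := hsep R hR0 a ⟨ha, not_lt.mpr (min_le_left _ (dist b x₀))⟩
        b ⟨hb, not_lt.mpr (min_le_right (dist a x₀) _)⟩
      rw [div_lt_iff₀ hβ] at hab
      linarith
  linarith

section DistThrough

variable {X : Type*} [PseudoMetricSpace X]

/-- The metric `d_S` on the double of `X`, evaluated at `(x, y')`. -/
noncomputable def distThrough (S : Set X) (x y : X) : ℝ :=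
  ⨅ z : S, (dist x (z : X) + 1 + dist (z : X) y)

theorem bddBelow_range_distThrough (S : Set X) (x y : X) :
    BddBelow (Set.range fun z : S => dist x (z : X) + 1 + dist (z : X) y) :=
  ⟨0, by rintro _ ⟨z, rfl⟩; positivity⟩

theorem distThrough_nonneg (S : Set X) (x y : X) : 0 ≤ distThrough S x y :=
  Real.iInf_nonneg fun _ => by positivity

theorem distThrough_le {S : Set X} {z : X} (hz : z ∈ S) (x y : X) :
    distThrough S x y ≤ dist x z + 1 + dist z y :=
  ciInf_le (bddBelow_range_distThrough S x y) ⟨z, hz⟩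

variable {A B : Set X}

theorem compFun_distThrough_nonneg (A B : Set X) (x z : X) :
    0 ≤ compFun (distThrough A) (distThrough B) x z :=
  Real.iInf_nonneg fun _ => add_nonneg (distThrough_nonneg _ _ _) (distThrough_nonneg _ _ _)

theorem compFun_distThrough_le {a b : X} (ha : a ∈ A) (hb : b ∈ B) (x z : X) :
    compFun (distThrough A) (distThrough B) x z ≤ dist x b + dist b a + dist a z + 2 := by
  have hbdd : BddBelow (Set.range fun y => distThrough B x y + distThrough A y z) :=
    ⟨0, by rintro _ ⟨y, rfl⟩; exact add_nonneg (distThrough_nonneg _ _ _) (distThrough_nonneg _ _ _)⟩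
  calc compFun (distThrough A) (distThrough B) x z
      ≤ distThrough B x b + distThrough A b z := ciInf_le hbdd b
    _ ≤ (dist x b + 1 + dist b b) + (dist b a + 1 + dist a z) :=
        add_le_add (distThrough_le hb x b) (distThrough_le ha b z)
    _ = dist x b + dist b a + dist a z + 2 := by rw [dist_self]; ring

theorem le_compFun_distThrough (hA : A.Nonempty) (hB : B.Nonempty) {x z : X} {c : ℝ}
    (h : ∀ a ∈ A, ∀ b ∈ B, c ≤ dist x b + dist b a + dist a z + 2) :
    c ≤ compFun (distThrough A) (distThrough B) x z := by
  have := hA.to_subtype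
  have := hB.to_subtype
  have : Nonempty X := ⟨hA.some⟩
  refine le_ciInf fun y => le_ciInf_add_ciInf fun b a => ?_
  linarith [h a a.2 b b.2, dist_triangle (b : X) y a]

end DistThrough

theorem statement16_general {X : Type*} [MetricSpace X] (x0 : X) (A B : Set X)
    (hA : A.Nonempty) (hB : B.Nonempty)
    (h : ∃ β ≥ (1:ℝ), ∀ R > (0:ℝ), ∀ a ∈ A \ Metric.ball x0 R,
      ∀ b ∈ B \ Metric.ball x0 R, R / β < dist a b) :
    QI (compFun (fun x y => ⨅ z : A, (dist x (z : X) + 1 + dist (z : X) y))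
          (fun x y => ⨅ z : B, (dist x (z : X) + 1 + dist (z : X) y)))
       (fun x y => dist x x0 + 1 + dist x0 y) := by
  obtain ⟨β, hβ, hsep⟩ := h
  obtain ⟨a₀, ha₀⟩ := hA
  obtain ⟨b₀, hb₀⟩ := hB
  change QI (compFun (distThrough A) (distThrough B)) _
  refine QI.of_le_add_of_le_mul (α := dist x0 b₀ + dist b₀ a₀ + dist a₀ x0 + 1)
    (β := 2 * β + 1) (by positivity) (by linarith)
    (compFun_distThrough_nonneg A B) (fun x z => ?_) (fun x z => ?_)
  · linarith [compFun_distThrough_le ha₀ hb₀ x z, dist_triangle x x0 b₀, dist_triangle a₀ x0 z]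
  · rw [← div_le_iff₀' (by linarith)]
    refine le_compFun_distThrough ⟨a₀, ha₀⟩ ⟨b₀, hb₀⟩ fun a ha b hb => ?_
    rw [div_le_iff₀' (by linarith)]
    have hab := dist_add_dist_le_of_forall_lt_dist_diff_ball (by linarith) hsep ha hb
    rw [dist_comm a b] at hab
    have : 0 ≤ β * (dist x b + dist a z + 2) := by positivity
    linarith [dist_triangle x b x0, dist_triangle x0 a z, dist_comm x0 a]

/-- if for some `β ≥ 1`, for every `R > 0` the parts of `A` and `B`
outside the ball `B_R(x_0)` are at distance `> R/β` from each other, then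
`d_A ∘ d_B ~ e_0`. -/
theorem statement16 {X : Type*} [MetricSpace X] [Nonempty X] (x0 : X) (A B : Set X)
    (hA : A.Nonempty) (hB : B.Nonempty)
    (h : ∃ β ≥ (1:ℝ), ∀ R > (0:ℝ), ∀ a ∈ A \ Metric.ball x0 R,
      ∀ b ∈ B \ Metric.ball x0 R, R / β < dist a b) :
    QI (compFun (fun x y => ⨅ z : A, (dist x (z : X) + 1 + dist (z : X) y))
          (fun x y => ⨅ z : B, (dist x (z : X) + 1 + dist (z : X) y)))
       (fun x y => dist x x0 + 1 + dist x0 y) :=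
  statement16_general x0 A B hA hB h
end

section
/- If [d] ∈ M(X) is invertible (i.e., [d* ∘ d] = [d ∘ d*] = [I]), then there exists an almost isometry f: X → X such that [d^f] = [d], where d^f(x,y') = inf_{z∈X}[d_X(x,z) + C + d_X(f(z),y)] for a suitable constant C > 0. -/
open Metric

/-- A map `f : X → X` is an almost isometry. -/
def AlmostIsometry {X : Type*} [MetricSpace X] (f : X → X) : Prop :=
  (∃ C > (0:ℝ), ∀ x x' : X,
    dist x x' - C ≤ dist (f x) (f x') ∧ dist (f x) (f x') ≤ dist x x' + C) ∧
  (∃ g : X → X, ∃ D > (0:ℝ), ∀ x, dist (g (f x)) x < D ∧ dist (f (g x)) x < D)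

/-! Evaluated on the diagonal, where `I(x,x) = 1`, the lower bounds in `d* ∘ d ~ I` and
`d ∘ d* ~ I` give every point a `d`-partner at uniformly bounded distance, on either side.
Choosing partners gives maps `f` and `g`; the cross-triangle inequalities make `f` an almost
isometry with quasi-inverse `g`, and keep `d^f` within a bounded additive error of `d`, the
infimum defining `d^f(x,y')` being nearly attained at `z = g y`. -/

lemma QI.of_le_add {X Y : Type*} {d₁ d₂ : X → Y → ℝ} {α : ℝ} (hα : 0 < α)
    (h₁ : ∀ x y, d₁ x y ≤ d₂ x y + α) (h₂ : ∀ x y, d₂ x y ≤ d₁ x y + α) : QI d₁ d₂ :=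
  ⟨α, hα, 1, le_rfl, fun x y => by
    simp only [div_one, one_mul]
    exact ⟨by linarith [h₁ x y], by linarith [h₂ x y]⟩⟩

lemma exists_uniform_near_of_qi_comp_adj {X : Type*} [PseudoMetricSpace X] {k : X → X → ℝ}
    (h : QI (compFun (adjFun k) k) (fun x y => dist x y + 1)) :
    ∃ K > 0, ∀ x, ∃ y, k x y ≤ K := by
  obtain ⟨α, hα, β, hβ, H⟩ := h
  have hβ₀ : 0 < β := one_pos.trans_le hβ
  refine ⟨(β * (1 + α) + 1) / 2, by positivity, fun x => ?_⟩
  have hdiag : (⨅ y, (k x y + k x y)) ≤ β * (1 + α) := by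
    have h := (H x x).1
    simp only [compFun, adjFun, dist_self, zero_add] at h
    rw [← div_le_iff₀' hβ₀]
    linarith [one_div_mul_eq_div β (⨅ y, (k x y + k x y))]
  have : Nonempty X := ⟨x⟩
  obtain ⟨y, hy⟩ := exists_lt_of_ciInf_lt (hdiag.trans_lt (lt_add_one _))
  exact ⟨y, by linarith⟩

namespace CrossMetric

variable {X : Type*} [MetricSpace X] (d : CrossMetric X X) {f g : X → X} {K K' : ℝ}

lemma almostIsometry_of_near (hK : 0 < K) (hK' : 0 < K') (hf : ∀ x, d.k x (f x) ≤ K)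
    (hg : ∀ y, d.k (g y) y ≤ K') : AlmostIsometry f := by
  refine ⟨⟨2 * K, by linarith, fun x x' => ⟨?_, ?_⟩⟩, g, K + K' + 1, by linarith, fun x => ⟨?_, ?_⟩⟩
  · linarith [d.cross_left x x' (f x), d.tri_right x' (f x) (f x'), dist_comm (f x) (f x'),
      hf x, hf x']
  · linarith [d.cross_right x (f x) (f x'), d.tri_left x x' (f x'), hf x, hf x']
  · linarith [d.cross_left (g (f x)) x (f x), hg (f x), hf x]
  · linarith [d.cross_right (g x) (f (g x)) x, hf (g x), hg x]

lemma le_iInf_dist_add_dist (hf : ∀ x, d.k x (f x) ≤ K) (x y : X) :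
    d.k x y ≤ ⨅ z, (dist x z + K + dist (f z) y) := by
  have : Nonempty X := ⟨x⟩
  exact le_ciInf fun z => by linarith [d.tri_left x z y, d.tri_right z y (f z), hf z]

lemma iInf_dist_add_dist_le (hf : ∀ x, d.k x (f x) ≤ K) (hg : ∀ y, d.k (g y) y ≤ K') (x y : X) :
    ⨅ z, (dist x z + K + dist (f z) y) ≤ d.k x y + (2 * K + 2 * K') := by
  have hbdd : BddBelow (Set.range fun z => dist x z + K + dist (f z) y) :=
    ⟨K, by
      rintro _ ⟨z, rfl⟩
      linarith [dist_nonneg (x := x) (y := z), dist_nonneg (x := f z) (y := y)]⟩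
  calc ⨅ z, (dist x z + K + dist (f z) y) ≤ dist x (g y) + K + dist (f (g y)) y :=
        ciInf_le hbdd (g y)
    _ ≤ d.k x y + (2 * K + 2 * K') := by
        linarith [d.cross_left x (g y) y, d.cross_right (g y) (f (g y)) y, hf (g y), hg y]

end CrossMetric

theorem statement19_general {X : Type*} [MetricSpace X] (d : CrossMetric X X)
    (h1 : QI (compFun (adjFun d.k) d.k) (fun x y => dist x y + 1))
    (h2 : QI (compFun d.k (adjFun d.k)) (fun x y => dist x y + 1)) :
    ∃ f : X → X, AlmostIsometry f ∧ ∃ C > (0:ℝ),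
      QI (fun x y => ⨅ z, (dist x z + C + dist (f z) y)) d.k := by
  obtain ⟨K, hK, hnear⟩ := exists_uniform_near_of_qi_comp_adj h1
  -- `compFun d.k (adjFun d.k)` is `compFun (adjFun (adjFun d.k)) (adjFun d.k)` by unfolding.
  obtain ⟨K', hK', hnear'⟩ := exists_uniform_near_of_qi_comp_adj (k := adjFun d.k) h2
  choose f hf using hnear
  choose g hg using hnear'
  refine ⟨f, d.almostIsometry_of_near hK hK' hf hg, K, hK, QI.of_le_add (α := 2 * K + 2 * K' + 1)
    (by positivity) (fun x y => ?_) (fun x y => ?_)⟩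
  · linarith [d.iInf_dist_add_dist_le hf hg x y]
  · linarith [d.le_iInf_dist_add_dist hf x y]

/-- if `[d]` is invertible in `M(X)` (i.e. `d* ∘ d ~ I ~ d ∘ d*`), then
`[d] = [d^f]` for some almost isometry `f`, where
`d^f(x,y') = inf_z [d(x,z) + C + d(f(z),y)]`. -/
theorem statement19 {X : Type*} [MetricSpace X] [Nonempty X] (d : CrossMetric X X)
    (h1 : QI (compFun (adjFun d.k) d.k) (fun x y => dist x y + 1))
    (h2 : QI (compFun d.k (adjFun d.k)) (fun x y => dist x y + 1)) :
    ∃ f : X → X, AlmostIsometry f ∧ ∃ C > (0:ℝ),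
      QI (fun x y => ⨅ z, (dist x z + C + dist (f z) y)) d.k :=
  statement19_general d h1 h2
end
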